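/- arXiv:1910.00614 — 2 statements merged into one kernel-verified Lean document; each statement's English description precedes it below -/
import Mathlib

section
/- Let ψ be a finite-horizon choice function that is π-consistent and monotonic, and let the leaf evaluation function be u = V^π. Then for any state path p;s with 1 ≤ |p;s| ≤ H(ψ), the tree value satisfies V^ψ_u(⌟p;s) ≥ V^ψ_u(p;s), where ⌟p;s denotes the path obtained by removing the first state-action pair of p;s. -/
open Finset

/-- A finite Markov Decision Process with transition kernel `P` and reward `R`. -/
structure MDP (S A : Type) [Fintype S] where
  P : S → A → S → ℝ
  R : S → A → ℝ
  P_nonneg : ∀ s a s', 0 ≤ P s a s'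
  P_sum : ∀ s a, ∑ s', P s a s' = 1

/-- A state path: a root state followed by an alternating list of actions and states. -/
abbrev SPath (S A : Type) := S × List (A × S)

variable {S A : Type}

/-- The current (last) state of a path. -/
def curS (p : SPath S A) : S := (p.2.getLast?.map Prod.snd).getD p.1

/-- Extend a path by an action and a successor state. -/
def extP (p : SPath S A) (a : A) (s' : S) : SPath S A := (p.1, p.2 ++ [(a, s')])

/-- Remove the first state-action pair of a path (identity on length-0 paths). -/
def dropFirst (p : SPath S A) : SPath S A :=
  match p with
  | (s₀, []) => (s₀, [])
  | (_, (_, s₁) :: rest) => (s₁, rest)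

/-- The length-zero path consisting of a single root state. -/
def rootP (s : S) : SPath S A := (s, ([] : List (A × S)))

/-- `p` is ψ-satisfying: every action along the path is allowed by ψ at the
corresponding prefix. -/
def SatCF (ψ : SPath S A → Finset A) (p : SPath S A) : Prop :=
  ∀ n (h : n < p.2.length), (p.2.get ⟨n, h⟩).1 ∈ ψ (p.1, p.2.take n)

/-- ψ is π-consistent: π's action is allowed at every non-leaf node. -/
def ConsistentCF (ψ : SPath S A → Finset A) (π : S → A) : Prop :=
  ∀ p, (ψ p).Nonempty → π (curS p) ∈ ψ p

/-- ψ is monotonic: `ψ(p;s) ⊆ ψ(⌟p;s)`. -/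
def MonoCF (ψ : SPath S A → Finset A) : Prop :=
  ∀ p : SPath S A, ψ p ⊆ ψ (dropFirst p)

/-- ψ has horizon at most H: every ψ-satisfying path of length ≥ H is a leaf. -/
def HorizonLE (ψ : SPath S A → Finset A) (H : ℕ) : Prop :=
  ∀ p : SPath S A, SatCF ψ p → H ≤ p.2.length → ψ p = ∅

/-- every leaf path of ψ has length at least h (min-horizon lower bound). -/
def MinLeaf (ψ : SPath S A → Finset A) (h : ℕ) : Prop :=
  ∀ p : SPath S A, SatCF ψ p → ψ p = ∅ → h ≤ p.2.length

variable [Fintype S] [Fintype A]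

/-- Tree value with explicit fuel (remaining depth). -/
noncomputable def treeVal (M : MDP S A) (γ : ℝ) (ψ : SPath S A → Finset A)
    (u : S → ℝ) : ℕ → SPath S A → ℝ
  | 0, p => u (curS p)
  | n + 1, p =>
      if h : (ψ p).Nonempty then
        (ψ p).sup' h fun a =>
          M.R (curS p) a + γ * ∑ s', M.P (curS p) a s' * treeVal M γ ψ u n (extP p a s')
      else u (curS p)

/-- `V^ψ_u(p;s)` for a choice function ψ of horizon H. -/
noncomputable def Vt (M : MDP S A) (γ : ℝ) (ψ : SPath S A → Finset A)
    (u : S → ℝ) (H : ℕ) (p : SPath S A) : ℝ :=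
  treeVal M γ ψ u (H - p.2.length) p

/-- `Q^ψ_u(s;a)` at a root node. -/
noncomputable def QrootCF (M : MDP S A) (γ : ℝ) (ψ : SPath S A → Finset A)
    (u : S → ℝ) (H : ℕ) (s : S) (a : A) : ℝ :=
  M.R s a + γ * ∑ s', M.P s a s' * Vt M γ ψ u H (extP (rootP s) a s')

/-- π' is a greedy root policy for the search tree of ψ with leaf evaluation u. -/
def IsGreedy (M : MDP S A) (γ : ℝ) (ψ : SPath S A → Finset A)
    (u : S → ℝ) (H : ℕ) (π' : S → A) : Prop :=
  ∀ s, π' s ∈ ψ (rootP s) ∧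
    ∀ a ∈ ψ (rootP s), QrootCF M γ ψ u H s a ≤ QrootCF M γ ψ u H s (π' s)

/-- `V` is the value function of the stationary policy π. -/
def IsValue (M : MDP S A) (γ : ℝ) (π : S → A) (V : S → ℝ) : Prop :=
  ∀ s, V s = M.R s (π s) + γ * ∑ s', M.P s (π s) s' * V s'

/-- Policy-restricted Bellman backup `B_π[V](s)`. -/
noncomputable def Bpol (M : MDP S A) (γ : ℝ) (π : S → A) (V : S → ℝ) (s : S) : ℝ :=
  M.R s (π s) + γ * ∑ s', M.P s (π s) s' * V s'

section Aux

variable {M : MDP S A} {γ : ℝ} {ψ : SPath S A → Finset A} {π : S → A} {Vpi : S → ℝ}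

lemma curS_ext (p : SPath S A) (a : A) (s' : S) : curS (extP p a s') = s' := by
  simp [curS, extP]

lemma curS_dropFirst (p : SPath S A) (hp : p.2 ≠ []) : curS (dropFirst p) = curS p := by
  obtain ⟨s₀, l⟩ := p
  match l with
  | [] => simp at hp
  | (a₁, s₁) :: rest =>
    cases rest with
    | nil => simp [curS, dropFirst]
    | cons x xs =>
      simp only [curS, dropFirst, List.getLast?_cons_cons]
      cases hgl : (x :: xs).getLast? with
      | none => simp [List.getLast?_eq_none_iff] at hgl
      | some y => simp

lemma dropFirst_ext (p : SPath S A) (hp : p.2 ≠ []) (a : A) (s' : S) :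
    dropFirst (extP p a s') = extP (dropFirst p) a s' := by
  obtain ⟨s₀, l⟩ := p
  match l with
  | [] => simp at hp
  | (a₁, s₁) :: rest => simp [dropFirst, extP]

lemma sat_ext {p : SPath S A} (hsat : SatCF ψ p) {a : A} (ha : a ∈ ψ p) (s' : S) :
    SatCF ψ (extP p a s') := by
  intro n h
  have hlen : n < p.2.length + 1 := by simpa [extP] using h
  simp only [extP, List.get_eq_getElem]
  rcases lt_or_ge n p.2.length with hn | hn
  · rw [List.getElem_append_left hn, List.take_append_of_le_length hn.le]
    simpa using hsat n hn
  · have hn' : n = p.2.length := by omega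
    subst hn'
    rw [List.getElem_concat_length]
    · simpa using ha
    · rfl

lemma sat_drop (hmono : MonoCF ψ) {p : SPath S A} (hsat : SatCF ψ p) :
    SatCF ψ (dropFirst p) := by
  obtain ⟨s₀, l⟩ := p
  match l with
  | [] => simpa [dropFirst] using hsat
  | (a₁, s₁) :: rest =>
    intro n h
    simp only [dropFirst] at h ⊢
    have h' : n + 1 < ((a₁, s₁) :: rest).length := by simpa using Nat.succ_lt_succ h
    have := hsat (n + 1) h'
    have hdrop : dropFirst (s₀, ((a₁, s₁) :: rest).take (n + 1)) = (s₁, rest.take n) := by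
      simp [dropFirst]
    have hmem := hmono (s₀, ((a₁, s₁) :: rest).take (n + 1)) this
    rw [hdrop] at hmem
    simpa using hmem

lemma treeVal_pos (n : ℕ) (p : SPath S A) (h : (ψ p).Nonempty) (u : S → ℝ) :
    treeVal M γ ψ u (n + 1) p = (ψ p).sup' h fun a =>
      M.R (curS p) a + γ * ∑ s', M.P (curS p) a s' * treeVal M γ ψ u n (extP p a s') := by
  simp [treeVal, h]

lemma treeVal_neg (n : ℕ) (p : SPath S A) (h : ¬ (ψ p).Nonempty) (u : S → ℝ) :
    treeVal M γ ψ u (n + 1) p = u (curS p) := by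
  simp [treeVal, h]

lemma vpi_le_treeVal (hγ0 : 0 ≤ γ) (hVpi : IsValue M γ π Vpi)
    (hcons : ConsistentCF ψ π) :
    ∀ n (p : SPath S A), SatCF ψ p → Vpi (curS p) ≤ treeVal M γ ψ Vpi n p := by
  intro n
  induction n with
  | zero => intro p _; simp [treeVal]
  | succ n ih =>
    intro p hsat
    by_cases h : (ψ p).Nonempty
    · rw [treeVal_pos n p h]
      have hπ := hcons p h
      refine le_trans ?_ (Finset.le_sup' _ hπ)
      rw [hVpi (curS p)]
      gcongr with s' _
      · exact M.P_nonneg _ _ _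
      · have := ih (extP p (π (curS p)) s') (sat_ext hsat hπ s')
        rwa [curS_ext] at this
    · rw [treeVal_neg n p h]

lemma treeVal_fuel (hγ0 : 0 ≤ γ) (hVpi : IsValue M γ π Vpi)
    (hcons : ConsistentCF ψ π) :
    ∀ n (p : SPath S A), SatCF ψ p →
      treeVal M γ ψ Vpi n p ≤ treeVal M γ ψ Vpi (n + 1) p := by
  intro n
  induction n with
  | zero =>
    intro p hsat
    exact vpi_le_treeVal hγ0 hVpi hcons 1 p hsat
  | succ n ih =>
    intro p hsat
    by_cases h : (ψ p).Nonempty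
    · rw [treeVal_pos n p h, treeVal_pos (n + 1) p h]
      apply Finset.sup'_le
      intro a ha
      refine le_trans ?_ (Finset.le_sup' _ ha)
      gcongr with s' _
      · exact M.P_nonneg _ _ _
      · exact ih (extP p a s') (sat_ext hsat ha s')
    · rw [treeVal_neg n p h, treeVal_neg (n + 1) p h]

lemma treeVal_drop (hγ0 : 0 ≤ γ) (hVpi : IsValue M γ π Vpi)
    (hcons : ConsistentCF ψ π) (hmono : MonoCF ψ) :
    ∀ n (p : SPath S A), SatCF ψ p →
      treeVal M γ ψ Vpi n p ≤ treeVal M γ ψ Vpi n (dropFirst p) := by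
  intro n
  induction n with
  | zero =>
    intro p _
    by_cases hp : p.2 = []
    · obtain ⟨s₀, l⟩ := p
      simp_all [dropFirst]
    · simp [treeVal, curS_dropFirst p hp]
  | succ n ih =>
    intro p hsat
    by_cases hp : p.2 = []
    · obtain ⟨s₀, l⟩ := p
      simp_all [dropFirst]
    · by_cases h : (ψ p).Nonempty
      · have h' : (ψ (dropFirst p)).Nonempty := h.mono (hmono p)
        rw [treeVal_pos n p h, treeVal_pos n (dropFirst p) h']
        apply Finset.sup'_le
        intro a ha
        refine le_trans ?_ (Finset.le_sup' _ (hmono p ha))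
        rw [curS_dropFirst p hp]
        gcongr with s' _
        · exact M.P_nonneg _ _ _
        · have := ih (extP p a s') (sat_ext hsat ha s')
          rwa [dropFirst_ext p hp a s'] at this
      · rw [treeVal_neg n p h, ← curS_dropFirst p hp]
        exact vpi_le_treeVal hγ0 hVpi hcons (n + 1) (dropFirst p) (sat_drop hmono hsat)

end Aux

/-- Lemma 2: for a π-consistent monotonic finite-horizon ψ with `u = V^π`,
`V^ψ_u(⌟p;s) ≥ V^ψ_u(p;s)` for all tree paths with `1 ≤ |p;s| ≤ H(ψ)`. -/
theorem stmt_1 {S A : Type} [Fintype S] [Fintype A]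
    (M : MDP S A) (γ : ℝ) (hγ0 : 0 ≤ γ) (hγ1 : γ < 1)
    (π : S → A) (Vpi : S → ℝ) (hVpi : IsValue M γ π Vpi)
    (ψ : SPath S A → Finset A) (H : ℕ) (hfin : HorizonLE ψ H)
    (hcons : ConsistentCF ψ π) (hmono : MonoCF ψ)
    (p : SPath S A) (hsat : SatCF ψ p)
    (hlen1 : 1 ≤ p.2.length) (hlenH : p.2.length ≤ H) :
    Vt M γ ψ Vpi H p ≤ Vt M γ ψ Vpi H (dropFirst p) := by
  have hdlen : (dropFirst p).2.length = p.2.length - 1 := by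
    obtain ⟨s₀, l⟩ := p
    match l with
    | [] => simp at hlen1
    | (a₁, s₁) :: rest => simp [dropFirst]
  have hsat' := sat_drop hmono hsat
  unfold Vt
  rw [hdlen]
  have h1 : H - (p.2.length - 1) = (H - p.2.length) + 1 := by omega
  rw [h1]
  calc treeVal M γ ψ Vpi (H - p.2.length) p
      ≤ treeVal M γ ψ Vpi (H - p.2.length) (dropFirst p) :=
        treeVal_drop hγ0 hVpi hcons hmono _ p hsat
    _ ≤ treeVal M γ ψ Vpi (H - p.2.length + 1) (dropFirst p) :=
        treeVal_fuel hγ0 hVpi hcons _ _ hsat'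
end

section
/- Let ψ be a finite-horizon choice function that is π-consistent and monotonic, and let u = V^π. Then for every state s, the root value satisfies V^ψ_u(s) ≥ V^π(s). -/
open Finset

variable {S A : Type}

variable [Fintype S] [Fintype A]

/-!
Following π inside the tree is always allowed (π-consistency), and at a leaf the tree returns
`u = V^π`. Hence, by induction on the remaining depth, the tree value at any path dominates
`u` at its current state: one Bellman backup along π turns `u ≤ treeVal` at the children into
`u = B_π u ≤ treeVal` at the parent, and the maximum over `ψ` only increases it.
-/

@[simp]
theorem curS_extP {S A : Type} (p : SPath S A) (a : A) (s' : S) : curS (extP p a s') = s' := by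
  simp [curS, extP, List.getLast?_append]

theorem MDP.backup_mono {S A : Type} [Fintype S] (M : MDP S A) {γ : ℝ} (hγ : 0 ≤ γ) (s : S) (a : A) {V W : S → ℝ}
    (hVW : ∀ s', V s' ≤ W s') :
    M.R s a + γ * ∑ s', M.P s a s' * V s' ≤ M.R s a + γ * ∑ s', M.P s a s' * W s' := by
  gcongr with s' _
  · exact M.P_nonneg s a s'
  · exact hVW s'

theorem le_treeVal_of_le_Bpol {S A : Type} [Fintype S] [Fintype A] (M : MDP S A) {γ : ℝ} (hγ : 0 ≤ γ) {π : S → A} {u : S → ℝ}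
    (hu : ∀ s, u s ≤ Bpol M γ π u s) {ψ : SPath S A → Finset A} (hcons : ConsistentCF ψ π) :
    ∀ n p, u (curS p) ≤ treeVal M γ ψ u n p := by
  intro n
  induction n with
  | zero => intro p; simp [treeVal]
  | succ n ih =>
    intro p
    rw [treeVal]
    split_ifs with hne
    · calc u (curS p) ≤ Bpol M γ π u (curS p) := hu _
        _ ≤ M.R (curS p) (π (curS p)) + γ * ∑ s', M.P (curS p) (π (curS p)) s' *
              treeVal M γ ψ u n (extP p (π (curS p)) s') :=
            M.backup_mono hγ _ _ fun s' => by simpa using ih (extP p (π (curS p)) s')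
        _ ≤ _ := le_sup' (fun a => M.R (curS p) a + γ * ∑ s', M.P (curS p) a s' *
              treeVal M γ ψ u n (extP p a s')) (hcons p hne)
    · exact le_rfl

theorem stmt_2_general {S A : Type} [Fintype S] [Fintype A]
    (M : MDP S A) (γ : ℝ) (hγ0 : 0 ≤ γ)
    (π : S → A) (Vpi : S → ℝ) (hVpi : IsValue M γ π Vpi)
    (ψ : SPath S A → Finset A) (H : ℕ)
    (hcons : ConsistentCF ψ π) :
    ∀ s : S, Vpi s ≤ Vt M γ ψ Vpi H (rootP s) := fun s =>
  le_treeVal_of_le_Bpol M hγ0 (fun s => (hVpi s).le) hcons _ (rootP s)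

/-- Proposition (chaining): for a π-consistent monotonic finite-horizon ψ with
`u = V^π`, the root value satisfies `V^ψ_u(s) ≥ V^π(s)`. -/
theorem stmt_2 {S A : Type} [Fintype S] [Fintype A]
    (M : MDP S A) (γ : ℝ) (hγ0 : 0 ≤ γ) (hγ1 : γ < 1)
    (π : S → A) (Vpi : S → ℝ) (hVpi : IsValue M γ π Vpi)
    (ψ : SPath S A → Finset A) (H : ℕ) (hfin : HorizonLE ψ H)
    (hcons : ConsistentCF ψ π) (hmono : MonoCF ψ) :
    ∀ s : S, Vpi s ≤ Vt M γ ψ Vpi H (rootP s) :=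
  stmt_2_general M γ hγ0 π Vpi hVpi ψ H hcons
end
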